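/- arXiv:1302.5744 — 3 statements merged into one kernel-verified Lean document; each statement's English description precedes it below -/
import Mathlib

section
/- For all n ≥ 1, the number of partitions of n whose parts all occur with the same multiplicity equals the sum over divisors d of n of the number of partitions of d into distinct parts: Q̂(n) = ∑_{d|n} Q(d). -/
/-- `Q n`: the number of partitions of `n` into distinct parts. -/
def Q (n : ℕ) : ℕ := (Nat.Partition.distincts n).card

/-- `Qhat n`: the number of partitions of `n` in which every part occurs with
the same multiplicity. -/
def Qhat (n : ℕ) : ℕ :=
  (Finset.univ.filter fun p : Nat.Partition n =>
    ∀ i ∈ p.parts, ∀ j ∈ p.parts, p.parts.count i = p.parts.count j).card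

/-!
A partition in which every part occurs exactly `m` times is `m` copies of its set of distinct
parts; if those distinct parts sum to `d`, then `m * d = n`. Conversely, repeating every part of a
partition of a divisor `d` into distinct parts `n / d` times gives such a partition of `n`. This is
a bijection with the pairs `(d, p)`, `d ∣ n`, `p` a partition of `d` into distinct parts.
-/

namespace Multiset

variable {α : Type*} [DecidableEq α]

theorem exists_eq_nsmul_dedup {s : Multiset α}
    (h : ∀ i ∈ s, ∀ j ∈ s, s.count i = s.count j) : ∃ m : ℕ, s = m • s.dedup := by
  rcases s.empty_or_exists_mem with rfl | ⟨a, ha⟩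
  · exact ⟨0, by simp⟩
  · refine ⟨s.count a, ext.2 fun b => ?_⟩
    by_cases hb : b ∈ s
    · simp [hb, h b hb a ha]
    · simp [hb]

theorem count_nsmul_of_nodup {s : Multiset α} (hs : s.Nodup) (m : ℕ) {a : α} (ha : a ∈ s) :
    (m • s).count a = m := by
  rw [count_nsmul, count_eq_one_of_mem hs ha, mul_one]

end Multiset

namespace Nat.Partition

@[simps]
def dedup {n : ℕ} (p : n.Partition) : p.parts.dedup.sum.Partition where
  parts := p.parts.dedup
  parts_pos h := p.parts_pos (Multiset.mem_dedup.1 h)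
  parts_sum := rfl

@[simps]
def nsmulOfDvd {d n : ℕ} (hd : d ∣ n) (p : d.Partition) : n.Partition where
  parts := (n / d) • p.parts
  parts_pos h := p.parts_pos (Multiset.mem_nsmul.1 h).2
  parts_sum := by rw [Multiset.sum_nsmul, p.parts_sum, smul_eq_mul, Nat.div_mul_cancel hd]

theorem sigma_ext {x y : Σ n : ℕ, n.Partition} (h : x.2.parts = y.2.parts) : x = y := by
  obtain ⟨n, p⟩ := x
  obtain ⟨m, q⟩ := y
  obtain rfl : n = m := by rw [← p.parts_sum, ← q.parts_sum, h]
  exact congrArg _ (Nat.Partition.ext h)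

theorem mem_distincts_iff {n : ℕ} {p : n.Partition} : p ∈ distincts n ↔ p.parts.Nodup := by
  simp [distincts]

section EqualMultiplicities

variable {n : ℕ} {q : n.Partition}
  (hq : ∀ i ∈ q.parts, ∀ j ∈ q.parts, q.parts.count i = q.parts.count j)
include hq

theorem exists_mul_dedup_sum_eq :
    ∃ m : ℕ, m * q.parts.dedup.sum = n ∧ q.parts = m • q.parts.dedup := by
  obtain ⟨m, hm⟩ := Multiset.exists_eq_nsmul_dedup hq
  refine ⟨m, ?_, hm⟩
  calc m * q.parts.dedup.sum = (m • q.parts.dedup).sum := (Multiset.sum_nsmul ..).symm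
    _ = n := by rw [← hm, q.parts_sum]

theorem dedup_sum_dvd : q.parts.dedup.sum ∣ n := by
  obtain ⟨m, hmn, -⟩ := exists_mul_dedup_sum_eq hq
  exact ⟨m, by rw [mul_comm, hmn]⟩

theorem nsmulOfDvd_dedup (hn : n ≠ 0) : q.dedup.nsmulOfDvd (dedup_sum_dvd hq) = q := by
  obtain ⟨m, hmn, hm⟩ := exists_mul_dedup_sum_eq hq
  have hd : q.parts.dedup.sum ≠ 0 := right_ne_zero_of_mul (hmn ▸ hn)
  have hm' : n / q.parts.dedup.sum = m :=
    Nat.div_eq_of_eq_mul_left (Nat.pos_of_ne_zero hd) hmn.symm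
  ext1
  rw [nsmulOfDvd_parts, dedup_parts, hm', ← hm]

end EqualMultiplicities

variable {d n : ℕ} (hd : d ∣ n) {p : d.Partition}

theorem count_parts_nsmulOfDvd_eq (hp : p.parts.Nodup) :
    ∀ i ∈ (p.nsmulOfDvd hd).parts, ∀ j ∈ (p.nsmulOfDvd hd).parts,
      (p.nsmulOfDvd hd).parts.count i = (p.nsmulOfDvd hd).parts.count j := by
  simp only [nsmulOfDvd_parts]
  intro i hi j hj
  rw [Multiset.count_nsmul_of_nodup hp _ (Multiset.mem_nsmul.1 hi).2,
    Multiset.count_nsmul_of_nodup hp _ (Multiset.mem_nsmul.1 hj).2]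

theorem dedup_nsmulOfDvd (hn : n ≠ 0) (hp : p.parts.Nodup) :
    (⟨_, (p.nsmulOfDvd hd).dedup⟩ : Σ k : ℕ, k.Partition) = ⟨d, p⟩ := by
  refine sigma_ext ?_
  have hnd : n / d ≠ 0 := (Nat.div_ne_zero_iff_of_dvd hd).2 ⟨hn, ne_zero_of_dvd_ne_zero hn hd⟩
  rw [dedup_parts, nsmulOfDvd_parts, Multiset.dedup_nsmul hnd, hp.dedup]

end Nat.Partition

open Nat.Partition in
theorem Qhat_eq_sum_divisors_Q (n : ℕ) (hn : 1 ≤ n) :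
    Qhat n = ∑ d ∈ n.divisors, Q d := by
  have hn0 : n ≠ 0 := Nat.one_le_iff_ne_zero.1 hn
  simp only [Qhat, Q]
  rw [← Finset.card_sigma]
  refine Finset.card_bij' (fun q _ => ⟨_, q.dedup⟩)
    (fun x hx => x.2.nsmulOfDvd (Nat.dvd_of_mem_divisors (Finset.mem_sigma.1 hx).1)) ?_ ?_ ?_ ?_
  · intro q hq
    exact Finset.mem_sigma.2 ⟨Nat.mem_divisors.2 ⟨dedup_sum_dvd (Finset.mem_filter.1 hq).2, hn0⟩,
      mem_distincts_iff.2 (Multiset.nodup_dedup _)⟩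
  · rintro ⟨d, p⟩ hx
    exact Finset.mem_filter.2 ⟨Finset.mem_univ _,
      count_parts_nsmulOfDvd_eq _ (mem_distincts_iff.1 (Finset.mem_sigma.1 hx).2)⟩
  · intro q hq
    exact nsmulOfDvd_dedup (Finset.mem_filter.1 hq).2 hn0
  · rintro ⟨d, p⟩ hx
    exact dedup_nsmulOfDvd _ hn0 (mem_distincts_iff.1 (Finset.mem_sigma.1 hx).2)
end

section
/- For every positive integer a and every N ≥ 1, b_a(N) = ∑_{j≥1} μ(j) b̂_{aj}(N), where μ is the Möbius function. -/
/-!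
Expanding geometrically, `q^{n²+cn} / (1 - q^{cn}) = q^{n²} ∑_{m ≥ 1} q^{cnm}`. With `c = aj`,
the Möbius-weighted sum over `j` collects the exponent `q^{anℓ}` with weight `∑_{j ∣ ℓ} μ(j)`,
which vanishes unless `ℓ = 1`; so for each `n` the hatted summands combine to `q^{n²+an}`.
Cutting `j` off at `N` changes nothing below degree `N + 1`.
-/

open PowerSeries

/-- The Pochhammer symbol `(q)_n = ∏_{k=1}^n (1 - q^k)` as a formal power series over `ℚ`. -/
noncomputable def poch (n : ℕ) : PowerSeries ℚ :=
  ∏ k ∈ Finset.Icc 1 n, (1 - (X : PowerSeries ℚ) ^ k)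

/-- `B_m(q) = ∑_{n ≥ 1} q^{n² + m n} / (q)_n²`, defined coefficientwise (each coefficient
is a finite sum since the `n`-th summand has order at least `n² + m n > N` for `n > N`). -/
noncomputable def Bser (m : ℕ) : PowerSeries ℚ :=
  PowerSeries.mk fun N => ∑ n ∈ Finset.Icc 1 N,
    coeff N (X ^ (n ^ 2 + m * n) * ((poch n)⁻¹) ^ 2)

/-- `B̂_a(q) = ∑_{n ≥ 1} q^{n² + a n} / ((q)_n² (1 - q^{a n}))`, defined coefficientwise. -/
noncomputable def BserHat (a : ℕ) : PowerSeries ℚ :=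
  PowerSeries.mk fun N => ∑ n ∈ Finset.Icc 1 N,
    coeff N (X ^ (n ^ 2 + a * n) * ((poch n)⁻¹) ^ 2 * (1 - (X : PowerSeries ℚ) ^ (a * n))⁻¹)

/-- `b_m(N)`: the `N`-th coefficient of `B_m(q)`. -/
noncomputable def bCoeff (m N : ℕ) : ℚ := coeff N (Bser m)

/-- `b̂_a(N)`: the `N`-th coefficient of `B̂_a(q)`. -/
noncomputable def bCoeffHat (a N : ℕ) : ℚ := coeff N (BserHat a)

namespace PowerSeries

theorem coeff_mul_eq_of_coeff_eq {R : Type*} [Semiring R] {N : ℕ} (f : R⟦X⟧) {g h : R⟦X⟧}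
    (hgh : ∀ M ≤ N, coeff M g = coeff M h) : coeff N (f * g) = coeff N (f * h) := by
  simp only [coeff_mul]
  exact Finset.sum_congr rfl fun p hp =>
    by rw [hgh p.2 (Finset.HasAntidiagonal.antidiagonal.snd_le hp)]

variable {k : Type*} [Field k]

theorem inv_one_sub_X_pow {c : ℕ} (hc : c ≠ 0) :
    (1 - X ^ c : k⟦X⟧)⁻¹ = expand c hc (mk 1) := by
  rw [inv_eq_iff_mul_eq_one (by simp [hc])]
  simpa [expand_X] using congrArg (expand c hc) (mk_one_mul_one_sub_eq_one k)

theorem coeff_X_pow_mul_inv_one_sub_X_pow {c : ℕ} (hc : c ≠ 0) (M : ℕ) :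
    coeff M (X ^ c * (1 - X ^ c : k⟦X⟧)⁻¹) =
      (if c ∣ M then 1 else 0) - if M = 0 then 1 else 0 := by
  have hsplit : X ^ c * (1 - X ^ c : k⟦X⟧)⁻¹ = (1 - X ^ c)⁻¹ - 1 := by
    set I := (1 - X ^ c : k⟦X⟧)⁻¹
    calc X ^ c * I = I - (1 - X ^ c) * I := by ring
      _ = I - 1 := by rw [PowerSeries.mul_inv_cancel _ (by simp [hc])]
  rw [hsplit, map_sub, inv_one_sub_X_pow hc, coeff_expand, coeff_mk, Pi.one_apply, coeff_one]

end PowerSeries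

open PowerSeries ArithmeticFunction ArithmeticFunction.Moebius

theorem ArithmeticFunction.sum_divisors_moebius {R : Type*} [Ring R] (d : ℕ) :
    ∑ j ∈ d.divisors, (μ j : R) = if d = 1 then 1 else 0 := by
  simp_rw [← intCoe_apply, ← coe_mul_zeta_apply, coe_moebius_mul_coe_zeta, one_apply]

theorem Nat.filter_dvd_Icc_eq_divisors {d N : ℕ} (hd : d ≠ 0) (hdN : d ≤ N) :
    {j ∈ Finset.Icc 1 N | j ∣ d} = d.divisors := by
  ext j
  simp only [Finset.mem_filter, Finset.mem_Icc, Nat.mem_divisors]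
  constructor
  · rintro ⟨-, hj⟩
    exact ⟨hj, hd⟩
  · rintro ⟨hj, -⟩
    exact ⟨⟨Nat.pos_of_dvd_of_pos hj (Nat.pos_of_ne_zero hd),
      (Nat.le_of_dvd (Nat.pos_of_ne_zero hd) hj).trans hdN⟩, hj⟩

theorem sum_Icc_moebius_mul_dvd {R : Type*} [Ring R] {c M N : ℕ} (hc : c ≠ 0) (hM0 : M ≠ 0)
    (hM : M ≤ N) :
    ∑ j ∈ Finset.Icc 1 N, (μ j : R) * (if c * j ∣ M then 1 else 0) = if M = c then 1 else 0 := by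
  by_cases hcM : c ∣ M
  · obtain ⟨d, rfl⟩ := hcM
    have hd : d ≠ 0 := right_ne_zero_of_mul hM0
    have hdN : d ≤ N := (Nat.le_mul_of_pos_left d (Nat.pos_of_ne_zero hc)).trans hM
    simp only [Nat.mul_dvd_mul_iff_left (Nat.pos_of_ne_zero hc), mul_ite, mul_one, mul_zero,
      ← Finset.sum_filter, Nat.filter_dvd_Icc_eq_divisors hd hdN, sum_divisors_moebius,
      mul_eq_left₀ hc]
  · have hne : M ≠ c := fun h => hcM (h ▸ dvd_rfl)
    rw [if_neg hne]
    exact Finset.sum_eq_zero fun j _ => by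
      rw [if_neg fun h => hcM (dvd_of_mul_right_dvd h), mul_zero]

theorem coeff_sum_moebius_smul_lambert {k : Type*} [Field k] {c M N : ℕ} (hc : c ≠ 0)
    (hM : M ≤ N) :
    coeff M (∑ j ∈ Finset.Icc 1 N, (μ j : k) • (X ^ (c * j) * (1 - X ^ (c * j) : k⟦X⟧)⁻¹)) =
      coeff M (X ^ c : k⟦X⟧) := by
  have hterm : ∀ j ∈ Finset.Icc 1 N,
      coeff M ((μ j : k) • (X ^ (c * j) * (1 - X ^ (c * j) : k⟦X⟧)⁻¹)) =
        (μ j : k) * ((if c * j ∣ M then 1 else 0) - if M = 0 then 1 else 0) := fun j hj => by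
    rw [coeff_smul, smul_eq_mul, coeff_X_pow_mul_inv_one_sub_X_pow
      (mul_ne_zero hc (Nat.one_le_iff_ne_zero.1 (Finset.mem_Icc.1 hj).1))]
  rw [map_sum, Finset.sum_congr rfl hterm, coeff_X_pow]
  rcases eq_or_ne M 0 with rfl | hM0
  · simp [hc.symm]
  · simpa only [if_neg hM0, sub_zero] using sum_Icc_moebius_mul_dvd hc hM0 hM

open ArithmeticFunction ArithmeticFunction.Moebius in
theorem bCoeff_eq_moebius_sum_general (a N : ℕ) (ha : 1 ≤ a) :
    bCoeff a N = ∑ j ∈ Finset.Icc 1 N, (μ j : ℚ) * bCoeffHat (a * j) N := by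
  set F : ℕ → ℚ⟦X⟧ := fun n => X ^ (n ^ 2) * (poch n)⁻¹ ^ 2
  set G : ℕ → ℚ⟦X⟧ := fun c => X ^ c * (1 - X ^ c)⁻¹
  have hB : bCoeff a N = ∑ n ∈ Finset.Icc 1 N, coeff N (F n * X ^ (a * n)) := by
    rw [bCoeff, Bser, coeff_mk]
    refine Finset.sum_congr rfl fun n _ => ?_
    simp only [F, pow_add]
    congr 1
    ring
  have hBhat : ∀ j,
      bCoeffHat (a * j) N = ∑ n ∈ Finset.Icc 1 N, coeff N (F n * G (a * n * j)) := by
    intro j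
    rw [bCoeffHat, BserHat, coeff_mk]
    refine Finset.sum_congr rfl fun n _ => ?_
    simp only [F, G, pow_add, mul_right_comm a j n]
    congr 1
    ring
  calc bCoeff a N
      = ∑ n ∈ Finset.Icc 1 N,
          coeff N (F n * ∑ j ∈ Finset.Icc 1 N, (μ j : ℚ) • G (a * n * j)) := by
        rw [hB]
        refine Finset.sum_congr rfl fun n hn => coeff_mul_eq_of_coeff_eq _ fun M hM =>
          (coeff_sum_moebius_smul_lambert (mul_ne_zero (Nat.one_le_iff_ne_zero.1 ha)
            (Nat.one_le_iff_ne_zero.1 (Finset.mem_Icc.1 hn).1)) hM).symm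
    _ = ∑ j ∈ Finset.Icc 1 N, (μ j : ℚ) * bCoeffHat (a * j) N := by
        simp only [hBhat, Finset.mul_sum, mul_smul_comm, map_sum, coeff_smul, smul_eq_mul]
        exact Finset.sum_comm

open ArithmeticFunction ArithmeticFunction.Moebius in
theorem bCoeff_eq_moebius_sum (a N : ℕ) (ha : 1 ≤ a) (hN : 1 ≤ N) :
    bCoeff a N = ∑ j ∈ Finset.Icc 1 N, (μ j : ℚ) * bCoeffHat (a * j) N :=
  bCoeff_eq_moebius_sum_general a N ha
end

section
/- The generating function identity ∑_{n≥0} p(n) q^n = ∑_{n≥0} q^{n²}/(q)_n² holds as formal power series, where p(n) is the partition function and (q)_n = ∏_{k=1}^n (1-q^k). -/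
/-!
Durfee squares via Gaussian binomials `[n, k]`. Splitting the boundary path of a partition in an
`N × N` box at its midpoint gives the `q`-Vandermonde identity
`[2N, N] = ∑_{i+j=N} q^{i²} [N, i] [N, j]`. From `(q)_k (q)_m [k+m, k] = (q)_{k+m}` and
`(q)_{k+m} ≡ (q)_m mod q^{m+1}` we get `[k+m, k] ≡ 1/(q)_k mod q^{m+1}`. Hence, modulo
`q^{N+1}`, `[2N, N]` is `1/(q)_N`, the generating function of partitions with parts at most `N`,
and, as `i² + j ≥ N`, the summand for `(i, j)` is `q^{i²}/(q)_i²`.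
-/

open PowerSeries

open Finset

section QBinom

variable {R : Type*} [CommSemiring R]

noncomputable def qBinom : ℕ → ℕ → R⟦X⟧
  | _, 0 => 1
  | 0, _ + 1 => 0
  | n + 1, k + 1 => qBinom n k + X ^ (k + 1) * qBinom n (k + 1)

@[simp]
theorem qBinom_zero_right (n : ℕ) : (qBinom n 0 : R⟦X⟧) = 1 := by
  cases n <;> rfl

@[simp]
theorem qBinom_zero_succ (k : ℕ) : (qBinom 0 (k + 1) : R⟦X⟧) = 0 := rfl

theorem qBinom_succ_succ (n k : ℕ) :
    (qBinom (n + 1) (k + 1) : R⟦X⟧) = qBinom n k + X ^ (k + 1) * qBinom n (k + 1) :=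
  rfl

theorem qBinom_eq_zero_of_lt {n k : ℕ} (h : n < k) : (qBinom n k : R⟦X⟧) = 0 := by
  induction n generalizing k with
  | zero => obtain ⟨k, rfl⟩ := Nat.exists_eq_succ_of_ne_zero h.ne'; rfl
  | succ n ih =>
    obtain ⟨k, rfl⟩ := Nat.exists_eq_succ_of_ne_zero (Nat.ne_zero_of_lt h)
    rw [qBinom_succ_succ, ih (by omega), ih (by omega), mul_zero, add_zero]

@[simp]
theorem qBinom_self (n : ℕ) : (qBinom n n : R⟦X⟧) = 1 := by
  induction n with
  | zero => rfl
  | succ n ih =>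
    rw [qBinom_succ_succ, ih, qBinom_eq_zero_of_lt n.lt_succ_self, mul_zero, add_zero]

theorem qBinom_add_vandermonde (M N k : ℕ) :
    (qBinom (M + N) k : R⟦X⟧) =
      ∑ p ∈ antidiagonal k, X ^ (p.1 * (N - p.2)) * qBinom M p.1 * qBinom N p.2 := by
  induction N generalizing k with
  | zero =>
    cases k with
    | zero => simp
    | succ k => simp [Nat.sum_antidiagonal_succ']
  | succ N ih =>
    cases k with
    | zero => simp
    | succ k =>
      -- the exponents agree unless `N ≤ j`, where `qBinom N (j + 1)` vanishes
      have hterm : ∀ p ∈ antidiagonal k,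
          X ^ (k + 1) * (X ^ (p.1 * (N - (p.2 + 1))) * qBinom M p.1 * qBinom N (p.2 + 1)) =
            X ^ (p.1 * (N - p.2)) * qBinom M p.1 *
              (X ^ (p.2 + 1) * qBinom N (p.2 + 1) : R⟦X⟧) := by
        rintro ⟨i, j⟩ hij
        rw [HasAntidiagonal.mem_antidiagonal] at hij
        rcases lt_or_ge N (j + 1) with hN | hN
        · simp [qBinom_eq_zero_of_lt hN]
        · obtain ⟨d, rfl⟩ := Nat.exists_eq_add_of_le hN
          rw [← hij, Nat.add_sub_cancel_left, show j + 1 + d - j = d + 1 by omega]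
          ring
      rw [Nat.add_succ, qBinom_succ_succ, ih, ih, Nat.sum_antidiagonal_succ',
        Nat.sum_antidiagonal_succ', mul_add, mul_sum, sum_congr rfl hterm]
      simp only [qBinom_succ_succ, mul_add, sum_add_distrib, Nat.add_sub_add_right,
        qBinom_zero_right, Nat.sub_zero]
      ring

end QBinom

theorem poch_succ (n : ℕ) : poch (n + 1) = poch n * (1 - X ^ (n + 1)) :=
  prod_Icc_succ_top (Nat.le_add_left 1 n) _

theorem poch_eq_prod_range (n : ℕ) : poch n = ∏ i ∈ range n, (1 - X ^ (i + 1)) := by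
  induction n with
  | zero => simp [poch]
  | succ n ih => rw [poch_succ, prod_range_succ, ih]

@[simp]
theorem constantCoeff_poch (n : ℕ) : constantCoeff (poch n) = 1 := by
  induction n with
  | zero => simp [poch]
  | succ n ih => simp [poch_succ, ih]

theorem poch_ne_zero (n : ℕ) : poch n ≠ 0 :=
  fun h ↦ by simpa [h] using constantCoeff_poch n

theorem X_pow_dvd_poch_add_sub (m n : ℕ) : X ^ (m + 1) ∣ poch (m + n) - poch m := by
  induction n with
  | zero => simp
  | succ n ih =>
    rw [← add_assoc, poch_succ, show poch (m + n) * (1 - X ^ (m + n + 1)) - poch m =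
      (poch (m + n) - poch m) - X ^ (m + 1) * (X ^ n * poch (m + n)) by ring]
    exact dvd_sub ih (dvd_mul_right _ _)

theorem poch_mul_poch_mul_qBinom (i j : ℕ) :
    poch i * poch j * qBinom (i + j) i = poch (i + j) := by
  induction i generalizing j with
  | zero => simp [poch]
  | succ i ih =>
    induction j with
    | zero => simp [poch]
    | succ j ihj =>
      have h := ih (j + 1)
      rw [show i + (j + 1) = i + j + 1 by ring] at h
      rw [show i + 1 + j = i + j + 1 by ring] at ihj
      rw [show i + 1 + (j + 1) = i + j + 1 + 1 by ring, qBinom_succ_succ, poch_succ (i + j + 1)]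
      rw [poch_succ j] at h ⊢
      rw [poch_succ i] at ihj ⊢
      linear_combination (1 - X ^ (i + 1)) * h + X ^ (i + 1) * (1 - X ^ (j + 1)) * ihj

theorem qBinom_symm_add (i j : ℕ) : qBinom (i + j) i = (qBinom (i + j) j : ℚ⟦X⟧) := by
  have h := poch_mul_poch_mul_qBinom j i
  rw [add_comm j i, ← poch_mul_poch_mul_qBinom i j, mul_comm (poch j)] at h
  exact (mul_left_cancel₀ (mul_ne_zero (poch_ne_zero i) (poch_ne_zero j)) h).symm

theorem X_pow_dvd_qBinom_add_sub_inv_poch (k m : ℕ) :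
    X ^ (m + 1) ∣ qBinom (k + m) k - (poch k)⁻¹ := by
  have hunit : IsUnit (poch k * poch m) := by
    simp [isUnit_iff_constantCoeff]
  have h : poch k * poch m * (qBinom (k + m) k - (poch k)⁻¹) = poch (m + k) - poch m := by
    rw [mul_sub, poch_mul_poch_mul_qBinom, mul_right_comm,
      PowerSeries.mul_inv_cancel _ (by simp), one_mul, add_comm]
  rw [← hunit.dvd_mul_left, h]
  exact X_pow_dvd_poch_add_sub m k

open Nat.Partition PowerSeries.WithPiTopology in
theorem mk_card_restricted_le_eq_inv_poch (N : ℕ) :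
    (PowerSeries.mk fun n ↦ (#(restricted n (· ≤ N)) : ℚ)) = (poch N)⁻¹ := by
  have hprod := hasProd_powerSeriesMk_card_restricted ℚ (· ≤ N)
  rw [hprod.unique (hasProd_prod_of_ne_finset_one (s := range N)
      fun i hi ↦ if_neg (by simpa using hi)),
    PowerSeries.eq_inv_iff_mul_eq_one (by simp), poch_eq_prod_range, ← prod_mul_distrib]
  refine prod_eq_one fun i hi ↦ ?_
  rw [if_pos (Nat.succ_le_of_lt (mem_range.mp hi))]
  simp_rw [pow_mul]
  exact tsum_pow_mul_one_sub_of_constantCoeff_eq_zero (by simp)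

theorem coeff_inv_poch {n N : ℕ} (h : n ≤ N) :
    coeff n (poch N)⁻¹ = Fintype.card (Nat.Partition n) := by
  rw [← mk_card_restricted_le_eq_inv_poch, coeff_mk, Nat.Partition.restricted,
    filter_true_of_mem fun p _ i hi ↦ (p.le_of_mem_parts hi).trans h, card_univ]

theorem PowerSeries.coeff_eq_of_X_pow_dvd_sub {R : Type*} [CommRing R] {n : ℕ} {f g : R⟦X⟧}
    (h : X ^ (n + 1) ∣ f - g) : coeff n f = coeff n g := by
  simpa [sub_eq_zero] using X_pow_dvd_iff.mp h n n.lt_succ_self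

theorem X_pow_dvd_durfee_summand_sub (i j : ℕ) :
    X ^ (i + j + 1) ∣
      X ^ (i ^ 2) * qBinom (i + j) i * qBinom (i + j) j - X ^ (i ^ 2) * ((poch i)⁻¹) ^ 2 := by
  obtain ⟨d, hd⟩ := X_pow_dvd_qBinom_add_sub_inv_poch i j
  have h : X ^ (i ^ 2) * qBinom (i + j) i * qBinom (i + j) i - X ^ (i ^ 2) * ((poch i)⁻¹) ^ 2 =
      X ^ (i ^ 2 + (j + 1)) * ((qBinom (i + j) i + (poch i)⁻¹) * d) := by
    rw [pow_add]
    linear_combination X ^ (i ^ 2) * (qBinom (i + j) i + (poch i)⁻¹) * hd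
  rw [← qBinom_symm_add, h]
  exact dvd_mul_of_dvd_left (pow_dvd_pow X (by nlinarith)) _

/-- Euler's identity: `∑_{n ≥ 0} p(n) q^n = ∑_{n ≥ 0} q^{n²} / (q)_n²` as formal power
series (the right side defined coefficientwise; the `n`-th summand has order `n² > N`
for `n > N`). -/
theorem partition_genfun_durfee :
    (PowerSeries.mk fun n => (Fintype.card (Nat.Partition n) : ℚ)) =
      PowerSeries.mk fun N => ∑ n ∈ Finset.range (N + 1),
        coeff N (X ^ (n ^ 2) * ((poch n)⁻¹) ^ 2) := by
  ext N
  rw [coeff_mk, coeff_mk, ← coeff_inv_poch le_rfl]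
  calc coeff N (poch N)⁻¹
      = coeff N (qBinom (N + N) N) :=
        coeff_eq_of_X_pow_dvd_sub (dvd_sub_comm.mp (X_pow_dvd_qBinom_add_sub_inv_poch N N))
    _ = ∑ p ∈ antidiagonal N,
          coeff N (X ^ (p.1 * (N - p.2)) * qBinom N p.1 * qBinom N p.2) := by
        rw [qBinom_add_vandermonde, map_sum]
    _ = ∑ p ∈ antidiagonal N, coeff N (X ^ (p.1 ^ 2) * ((poch p.1)⁻¹) ^ 2) := by
        refine sum_congr rfl fun ⟨i, j⟩ hij ↦ ?_
        obtain rfl := HasAntidiagonal.mem_antidiagonal.mp hij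
        rw [Nat.add_sub_cancel, ← sq]
        exact coeff_eq_of_X_pow_dvd_sub (X_pow_dvd_durfee_summand_sub i j)
    _ = _ := Nat.sum_antidiagonal_eq_sum_range_succ_mk _ N
end
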